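/- arXiv:2007.02786 — 2 statements merged into one kernel-verified Lean document; each statement's English description precedes it below -/
import Mathlib

section
/- Let H be an n×n real matrix (n ≥ 1) admitting two regular splittings H = B₁ - C₁ and H = B₂ - C₂. If H is invertible, every entry of H⁻¹ is strictly positive, 0 ≤ C₂ ≤ C₁ entrywise, C₁ ≠ 0, C₂ ≠ 0, and C₁ - C₂ ≠ 0, then 0 < ρ(B₂⁻¹ C₂) < ρ(B₁⁻¹ C₁) < 1. -/
/-!
Everything rests on Perron–Frobenius theory for an entrywise nonnegative matrix `A`: its spectral
radius is an eigenvalue with a nonnegative eigenvector, and it bounds every `t` with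
`t • y ≤ A *ᵥ y` for some nonnegative `y ≠ 0` (the Collatz–Wielandt bound). For a positive matrix
the largest such `t` exists by compactness of the standard simplex, and any `y` attaining it is an
eigenvector, since otherwise `A *ᵥ y` would do strictly better; a nonnegative matrix is a limit of
positive ones.

With `A = H⁻¹ * C` and `G = B⁻¹ * C` one has `(1 - G) * (1 + A) = 1`, so nonnegative eigenvectors
of `A` and `G` correspond, with eigenvalues related by `μ ↦ μ / (1 + μ)`, and
`ρ(B⁻¹ C) = ρ(H⁻¹ C) / (1 + ρ(H⁻¹ C)) < 1`. As `H⁻¹` is positive, the Perron vector `x` of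
`H⁻¹ C₂` and `H⁻¹ (C₁ - C₂) x` are strictly positive, so `ρ(H⁻¹ C₂) < ρ(H⁻¹ C₁)`, and
`μ ↦ μ / (1 + μ)` is increasing.
-/

open Matrix

/-- Spectral radius of a real square matrix: the maximum of `|μ|` over all complex
eigenvalues `μ` of the matrix (elements of the spectrum of its complexification). -/
noncomputable def specRad {n : ℕ} (A : Matrix (Fin n) (Fin n) ℝ) : ℝ :=
  sSup {x : ℝ | ∃ μ ∈ spectrum ℂ (A.map (Complex.ofReal ·)), x = ‖μ‖}
/-- `(B, C)` is a regular splitting of `H`: `H = B - C`, `B` is invertible,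
every entry of `B⁻¹` is nonnegative, and every entry of `C` is nonnegative. -/
def IsRegularSplitting {n : ℕ} (H B C : Matrix (Fin n) (Fin n) ℝ) : Prop :=
  H = B - C ∧ IsUnit B ∧ (∀ i j, 0 ≤ B⁻¹ i j) ∧ (∀ i j, 0 ≤ C i j)

open Filter Topology

section Vectors

variable {ι : Type*} {x : ι → ℝ}

theorem exists_pos_of_nonneg_of_ne_zero (hx : 0 ≤ x) (hx0 : x ≠ 0) : ∃ i, 0 < x i :=
  (Pi.lt_def.1 (lt_of_le_of_ne hx (Ne.symm hx0))).2

theorem exists_pos_smul_le [Finite ι] (v : ι → ℝ) {w : ι → ℝ} (hw : ∀ i, 0 < w i) :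
    ∃ δ : ℝ, 0 < δ ∧ δ • v ≤ w := by
  have hsmall : ∀ᶠ δ in 𝓝 (0 : ℝ), ∀ i, δ * v i < w i := eventually_all.2 fun i =>
    ((continuous_mul_const (v i)).tendsto 0).eventually (gt_mem_nhds (by simpa using hw i))
  obtain ⟨δ, hδ, hδ0⟩ := ((hsmall.filter_mono nhdsWithin_le_nhds).and
    (self_mem_nhdsWithin : ∀ᶠ δ in 𝓝[>] (0 : ℝ), δ ∈ Set.Ioi 0)).exists
  exact ⟨δ, hδ0, fun i => (hδ i).le⟩

theorem ne_zero_of_mem_stdSimplex [Fintype ι] (hx : x ∈ stdSimplex ℝ ι) : x ≠ 0 :=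
  fun h => by simpa [h] using hx.2

end Vectors

namespace Matrix

variable {ι : Type*} [Fintype ι] {A B : Matrix ι ι ℝ} {x y : ι → ℝ} {r t : ℝ}

theorem mulVec_nonneg_of_nonneg (hA : ∀ i j, 0 ≤ A i j) (hx : 0 ≤ x) : 0 ≤ A *ᵥ x :=
  fun i => Finset.sum_nonneg fun j _ => mul_nonneg (hA i j) (hx j)

theorem mulVec_le_mulVec_of_le (hAB : ∀ i j, A i j ≤ B i j) (hx : 0 ≤ x) : A *ᵥ x ≤ B *ᵥ x :=
  fun i => Finset.sum_le_sum fun j _ => mul_le_mul_of_nonneg_right (hAB i j) (hx j)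

theorem mul_le_mulVec_apply (hA : ∀ i j, 0 ≤ A i j) (hx : 0 ≤ x) (i j : ι) :
    A i j * x j ≤ (A *ᵥ x) i :=
  Finset.single_le_sum (f := fun j => A i j * x j) (fun k _ => mul_nonneg (hA i k) (hx k))
    (Finset.mem_univ j)

theorem mulVec_apply_pos (hA : ∀ i j, 0 < A i j) (hx : 0 ≤ x) (hx0 : x ≠ 0) (i : ι) :
    0 < (A *ᵥ x) i := by
  obtain ⟨j, hj⟩ := exists_pos_of_nonneg_of_ne_zero hx hx0
  exact (mul_pos (hA i j) hj).trans_le (mul_le_mulVec_apply (fun i j => (hA i j).le) hx i j)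

theorem mulVec_ne_zero_of_pos (hA : ∀ i j, 0 ≤ A i j) (hA0 : A ≠ 0) (hx : ∀ i, 0 < x i) :
    A *ᵥ x ≠ 0 := by
  obtain ⟨i, hi⟩ := Function.ne_iff.1 hA0
  obtain ⟨j, hij⟩ := Function.ne_iff.1 hi
  have hAij : 0 < A i j * x j := mul_pos (lt_of_le_of_ne (hA i j) (Ne.symm hij)) (hx j)
  exact Function.ne_iff.2
    ⟨i, (hAij.trans_le (mul_le_mulVec_apply hA (fun k => (hx k).le) i j)).ne'⟩

theorem mul_apply_nonneg (hA : ∀ i j, 0 ≤ A i j) (hB : ∀ i j, 0 ≤ B i j) (i j : ι) :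
    0 ≤ (A * B) i j :=
  mulVec_nonneg_of_nonneg hA (fun k => hB k j) i

theorem mul_apply_pos_of_pos (hA : ∀ i j, 0 < A i j) (hB : ∀ i j, 0 ≤ B i j) {p q : ι}
    (hpq : B p q ≠ 0) (i : ι) : 0 < (A * B) i q :=
  mulVec_apply_pos hA (fun k => hB k q) (fun h => hpq (congrFun h p)) i

def collatzWielandtSet (A : Matrix ι ι ℝ) : Set ℝ :=
  {t | ∃ y, 0 ≤ y ∧ y ≠ 0 ∧ t • y ≤ A *ᵥ y}

theorem collatzWielandtSet_mono (hAB : ∀ i j, A i j ≤ B i j) :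
    collatzWielandtSet A ⊆ collatzWielandtSet B :=
  fun _ ⟨y, hy, hy0, h⟩ => ⟨y, hy, hy0, h.trans (mulVec_le_mulVec_of_le hAB hy)⟩

theorem zero_mem_collatzWielandtSet [Nonempty ι] (hA : ∀ i j, 0 ≤ A i j) :
    0 ∈ collatzWielandtSet A :=
  ⟨1, zero_le_one, one_ne_zero, by simpa using mulVec_nonneg_of_nonneg hA zero_le_one⟩

theorem exists_mem_stdSimplex_of_mem_collatzWielandtSet (ht : t ∈ collatzWielandtSet A) :
    ∃ y ∈ stdSimplex ℝ ι, t • y ≤ A *ᵥ y := by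
  obtain ⟨y, hy, hy0, h⟩ := ht
  obtain ⟨i, hi⟩ := exists_pos_of_nonneg_of_ne_zero hy hy0
  have hs : 0 < ∑ j, y j :=
    hi.trans_le (Finset.single_le_sum (fun j _ => hy j) (Finset.mem_univ i))
  refine ⟨(∑ j, y j)⁻¹ • y, ⟨fun j => mul_nonneg (inv_nonneg.2 hs.le) (hy j), ?_⟩, ?_⟩
  · simp [← Finset.mul_sum, hs.ne']
  · rw [mulVec_smul, smul_comm]
    exact smul_le_smul_of_nonneg_left h (inv_nonneg.2 hs.le)

theorem le_sum_of_smul_le_mulVec (hA : ∀ i j, 0 ≤ A i j) (hy : y ∈ stdSimplex ℝ ι)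
    (h : t • y ≤ A *ᵥ y) : t ≤ ∑ i, ∑ j, A i j :=
  calc t = ∑ i, t * y i := by rw [← Finset.mul_sum, hy.2, mul_one]
    _ ≤ ∑ i, ∑ j, A i j * y j := Finset.sum_le_sum fun i _ => h i
    _ ≤ ∑ i, ∑ j, A i j := by
      gcongr with i _ j _
      exact mul_le_of_le_one_right (hA i j)
        ((Finset.single_le_sum (fun k _ => hy.1 k) (Finset.mem_univ j)).trans hy.2.le)

theorem exists_isGreatest_collatzWielandtSet [Nonempty ι] (hA : ∀ i j, 0 ≤ A i j) :
    ∃ r, IsGreatest (collatzWielandtSet A) r := by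
  set E : Set (ℝ × (ι → ℝ)) := {p | 0 ≤ p.1 ∧ p.2 ∈ stdSimplex ℝ ι ∧ p.1 • p.2 ≤ A *ᵥ p.2}
  have hE : IsCompact E := by
    refine ((isCompact_Icc (a := 0) (b := ∑ i, ∑ j, A i j)).prod
      (isCompact_stdSimplex ℝ ι)).of_isClosed_subset ?_ ?_
    · exact (isClosed_le continuous_const continuous_fst).inter
        (((isClosed_stdSimplex ℝ ι).preimage continuous_snd).inter
          (isClosed_le (by fun_prop) (continuous_const.matrix_mulVec continuous_snd)))
    · exact fun p hp => ⟨⟨hp.1, le_sum_of_smul_le_mulVec hA hp.2.1 hp.2.2⟩, hp.2.1⟩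
  obtain ⟨y, hy, hy0⟩ :=
    exists_mem_stdSimplex_of_mem_collatzWielandtSet (zero_mem_collatzWielandtSet hA)
  have hEne : E.Nonempty := ⟨(0, y), le_rfl, hy, hy0⟩
  obtain ⟨⟨r, x⟩, ⟨hr, hx, hrx⟩, hmax⟩ := hE.exists_isMaxOn hEne continuous_fst.continuousOn
  refine ⟨r, ⟨x, hx.1, ne_zero_of_mem_stdSimplex hx, hrx⟩, fun t ht => ?_⟩
  rcases le_or_gt t 0 with ht0 | ht0
  · exact ht0.trans hr
  · obtain ⟨y, hy, hty⟩ := exists_mem_stdSimplex_of_mem_collatzWielandtSet ht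
    exact hmax (show (t, y) ∈ E from ⟨ht0.le, hy, hty⟩)

theorem mulVec_eq_smul_of_mem_upperBounds (hA : ∀ i j, 0 < A i j)
    (hr : r ∈ upperBounds (collatzWielandtSet A)) (hx : 0 ≤ x) (hx0 : x ≠ 0)
    (h : r • x ≤ A *ᵥ x) : A *ᵥ x = r • x := by
  by_contra hne
  set y := A *ᵥ x
  have hy : ∀ i, 0 < y i := mulVec_apply_pos hA hx hx0
  have hAy : ∀ i, 0 < (A *ᵥ (y - r • x)) i :=
    mulVec_apply_pos hA (sub_nonneg.2 h) (sub_ne_zero.2 hne)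
  obtain ⟨δ, hδ, hδy⟩ := exists_pos_smul_le y hAy
  obtain ⟨i, -⟩ := exists_pos_of_nonneg_of_ne_zero hx hx0
  have : r + δ ∈ collatzWielandtSet A := by
    refine ⟨y, fun i => (hy i).le, fun h0 => (hy i).ne' (congrFun h0 i), ?_⟩
    rw [mulVec_sub, mulVec_smul] at hδy
    calc (r + δ) • y = r • y + δ • y := add_smul r δ y
      _ ≤ r • y + (A *ᵥ y - r • y) := add_le_add_right hδy _
      _ = A *ᵥ y := add_sub_cancel _ _
  linarith [hr this]

theorem exists_perron_eigenvector_of_pos [Nonempty ι] (hA : ∀ i j, 0 < A i j) :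
    ∃ r, ∃ x ∈ stdSimplex ℝ ι,
      A *ᵥ x = r • x ∧ r ∈ upperBounds (collatzWielandtSet A) := by
  obtain ⟨r, hr, hr_max⟩ := exists_isGreatest_collatzWielandtSet fun i j => (hA i j).le
  obtain ⟨x, hx, hrx⟩ := exists_mem_stdSimplex_of_mem_collatzWielandtSet hr
  exact ⟨r, x, hx, mulVec_eq_smul_of_mem_upperBounds hA hr_max hx.1
    (ne_zero_of_mem_stdSimplex hx) hrx, hr_max⟩

theorem exists_perron_eigenvector [Nonempty ι] (hA : ∀ i j, 0 ≤ A i j) :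
    ∃ r x, 0 ≤ x ∧ x ≠ 0 ∧ A *ᵥ x = r • x ∧ r ∈ upperBounds (collatzWielandtSet A) := by
  set ε : ℕ → ℝ := fun k => 1 / ((k : ℝ) + 1)
  set P : ℕ → Matrix ι ι ℝ := fun k => of fun i j => A i j + ε k
  have hε : ∀ k, 0 < ε k := fun k => by positivity
  have hPpos : ∀ k i j, 0 < P k i j := fun k i j => add_pos_of_nonneg_of_pos (hA i j) (hε k)
  have hAP : ∀ k i j, A i j ≤ P k i j := fun k i j => le_add_of_nonneg_right (hε k).le
  have hP0 : ∀ k i j, P k i j ≤ P 0 i j := fun k i j => by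
    simp only [P, of_apply, ε]; gcongr; positivity
  choose r x hx heig hr using fun k => exists_perron_eigenvector_of_pos (hPpos k)
  have hPx : ∀ k, P k *ᵥ x k = A *ᵥ x k + ε k • 1 := fun k => by
    ext i
    simp [P, mulVec, dotProduct, add_mul, Finset.sum_add_distrib, ← Finset.mul_sum, (hx k).2]
  have hr_mem : ∀ k, r k ∈ Set.Icc 0 (r 0) := fun k =>
    ⟨hr k (zero_mem_collatzWielandtSet fun i j => (hPpos k i j).le),
      hr 0 (collatzWielandtSet_mono (hP0 k)
        ⟨x k, (hx k).1, ne_zero_of_mem_stdSimplex (hx k), (heig k).ge⟩)⟩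
  obtain ⟨⟨R, z⟩, ⟨-, hz⟩, φ, hφ, hlim⟩ :=
    (isCompact_Icc.prod (isCompact_stdSimplex ℝ ι)).tendsto_subseq
      (x := fun k => (r k, x k)) fun k => ⟨hr_mem k, hx k⟩
  refine ⟨R, z, hz.1, ne_zero_of_mem_stdSimplex hz, ?_, fun t ht => ?_⟩
  · have hεlim : Tendsto (ε ∘ φ) atTop (𝓝 0) :=
      tendsto_one_div_add_atTop_nhds_zero_nat.comp hφ.tendsto_atTop
    have hAx : ∀ k, A *ᵥ x k = r k • x k - ε k • 1 := fun k => by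
      rw [← heig, hPx, add_sub_cancel_right]
    have hfst : Tendsto (r ∘ φ) atTop (𝓝 R) := (continuous_fst.tendsto _).comp hlim
    have hsnd : Tendsto (x ∘ φ) atTop (𝓝 z) := (continuous_snd.tendsto _).comp hlim
    have hlim₁ : Tendsto (fun k => A *ᵥ x (φ k)) atTop (𝓝 (A *ᵥ z)) :=
      ((continuous_const.matrix_mulVec continuous_id).tendsto z).comp hsnd
    have hlim₂ : Tendsto (fun k => A *ᵥ x (φ k)) atTop (𝓝 (R • z - (0 : ℝ) • 1)) := by
      simpa only [hAx, Function.comp_apply] using (hfst.smul hsnd).sub (hεlim.smul_const 1)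
    simpa using tendsto_nhds_unique hlim₁ hlim₂
  · exact ge_of_tendsto' ((continuous_fst.tendsto _).comp hlim) fun k =>
      hr (φ k) (collatzWielandtSet_mono (hAP (φ k)) ht)

theorem mem_spectrum_iff_exists_mulVec_eq_smul {K : Type*} [Field K] [DecidableEq ι]
    {A : Matrix ι ι K} {μ : K} :
    μ ∈ spectrum K A ↔ ∃ v ≠ 0, A *ᵥ v = μ • v := by
  rw [← spectrum_toLin', ← Module.End.hasEigenvalue_iff_mem_spectrum]
  refine ⟨fun h => ?_, fun ⟨v, hv, h⟩ => Module.End.hasEigenvalue_of_hasEigenvector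
    ⟨Module.End.mem_eigenspace_iff.2 h, hv⟩⟩
  obtain ⟨v, hv⟩ := h.exists_hasEigenvector
  exact ⟨v, hv.2, hv.apply_eq_smul⟩

end Matrix

section SpectralRadius

variable {n : ℕ} {A : Matrix (Fin n) (Fin n) ℝ} {x : Fin n → ℝ} {r : ℝ} {μ : ℂ}

theorem finite_norm_spectrum (A : Matrix (Fin n) (Fin n) ℝ) :
    {x : ℝ | ∃ μ ∈ spectrum ℂ (A.map (Complex.ofReal ·)), x = ‖μ‖}.Finite :=
  ((finite_spectrum _).image (‖·‖)).subset fun _ ⟨μ, hμ, h⟩ => ⟨μ, hμ, h.symm⟩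

theorem norm_le_specRad (hμ : μ ∈ spectrum ℂ (A.map (Complex.ofReal ·))) : ‖μ‖ ≤ specRad A :=
  le_csSup (finite_norm_spectrum A).bddAbove ⟨μ, hμ, rfl⟩

theorem exists_norm_eq_specRad [Nonempty (Fin n)] (A : Matrix (Fin n) (Fin n) ℝ) :
    ∃ μ ∈ spectrum ℂ (A.map (Complex.ofReal ·)), ‖μ‖ = specRad A := by
  obtain ⟨μ, hμ⟩ := spectrum.nonempty_of_isAlgClosed_of_finiteDimensional ℂ
    (A.map (Complex.ofReal ·))
  obtain ⟨ν, hν, h⟩ := Set.Nonempty.csSup_mem (s := {x : ℝ | ∃ μ ∈ spectrum ℂ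
    (A.map (Complex.ofReal ·)), x = ‖μ‖}) ⟨‖μ‖, μ, hμ, rfl⟩ (finite_norm_spectrum A)
  exact ⟨ν, hν, h.symm⟩

theorem specRad_nonneg [Nonempty (Fin n)] (A : Matrix (Fin n) (Fin n) ℝ) : 0 ≤ specRad A := by
  obtain ⟨μ, -, hμ⟩ := exists_norm_eq_specRad A
  exact hμ ▸ norm_nonneg μ

theorem ofReal_mem_spectrum_map (hx0 : x ≠ 0) (h : A *ᵥ x = r • x) :
    (r : ℂ) ∈ spectrum ℂ (A.map (Complex.ofReal ·)) := by
  refine mem_spectrum_iff_exists_mulVec_eq_smul.2 ⟨fun i => x i, fun h0 => hx0 ?_, ?_⟩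
  · exact funext fun i => by simpa using congrFun h0 i
  · funext i
    simpa [mulVec, dotProduct] using congrArg Complex.ofReal (congrFun h i)

theorem norm_mem_collatzWielandtSet (hA : ∀ i j, 0 ≤ A i j)
    (hμ : μ ∈ spectrum ℂ (A.map (Complex.ofReal ·))) : ‖μ‖ ∈ collatzWielandtSet A := by
  obtain ⟨v, hv0, hv⟩ := mem_spectrum_iff_exists_mulVec_eq_smul.1 hμ
  refine ⟨fun i => ‖v i‖, fun i => norm_nonneg _, fun h0 => hv0 ?_, fun i => ?_⟩
  · exact funext fun i => norm_eq_zero.1 (congrFun h0 i)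
  · calc ‖μ‖ * ‖v i‖ = ‖∑ j, (A i j : ℂ) * v j‖ := by
          simpa [mulVec, dotProduct] using congrArg (‖·‖) (congrFun hv i).symm
      _ ≤ ∑ j, ‖(A i j : ℂ) * v j‖ := norm_sum_le _ _
      _ = (A *ᵥ fun i => ‖v i‖) i := by
        simp [mulVec, dotProduct, abs_of_nonneg (hA _ _)]

theorem specRad_eq_of_mulVec_eq_smul [Nonempty (Fin n)] (hA : ∀ i j, 0 ≤ A i j) (hx0 : x ≠ 0)
    (h : A *ᵥ x = r • x) (hr : r ∈ upperBounds (collatzWielandtSet A)) : specRad A = r := by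
  obtain ⟨μ, hμ, hμr⟩ := exists_norm_eq_specRad A
  refine le_antisymm (hμr ▸ hr (norm_mem_collatzWielandtSet hA hμ)) ?_
  calc r ≤ ‖(r : ℂ)‖ := by simpa using le_abs_self r
    _ ≤ specRad A := norm_le_specRad (ofReal_mem_spectrum_map hx0 h)

theorem exists_nonneg_eigenvector_specRad [Nonempty (Fin n)] (hA : ∀ i j, 0 ≤ A i j) :
    ∃ x, 0 ≤ x ∧ x ≠ 0 ∧ A *ᵥ x = specRad A • x := by
  obtain ⟨r, x, hx, hx0, h, hr⟩ := exists_perron_eigenvector hA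
  exact ⟨x, hx, hx0, specRad_eq_of_mulVec_eq_smul hA hx0 h hr ▸ h⟩

theorem le_specRad_of_smul_le_mulVec [Nonempty (Fin n)] (hA : ∀ i j, 0 ≤ A i j) {y : Fin n → ℝ}
    {t : ℝ} (hy : 0 ≤ y) (hy0 : y ≠ 0) (h : t • y ≤ A *ᵥ y) : t ≤ specRad A := by
  obtain ⟨r, x, -, hx0, hx, hr⟩ := exists_perron_eigenvector hA
  exact specRad_eq_of_mulVec_eq_smul hA hx0 hx hr ▸ hr ⟨y, hy, hy0, h⟩

end SpectralRadius

section Splitting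

variable {n : ℕ}

theorem specRad_eq_div_one_add_specRad [Nonempty (Fin n)] {A G : Matrix (Fin n) (Fin n) ℝ}
    (hA : ∀ i j, 0 ≤ A i j) (hG : ∀ i j, 0 ≤ G i j) (hGA : (1 - G) * (1 + A) = 1) :
    specRad G = specRad A / (1 + specRad A) := by
  have hAG : (1 + A) * (1 - G) = 1 := mul_eq_one_comm.1 hGA
  have hρ := specRad_nonneg A
  apply le_antisymm
  · obtain ⟨x, hx, hx0, hGx⟩ := exists_nonneg_eigenvector_specRad hG
    set s := specRad G
    have hx_eq : ∀ i, (1 - s) * (x i + (A *ᵥ x) i) = x i := fun i => by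
      have := congrFun (congrArg (· *ᵥ x) hAG) i
      simp only [← mulVec_mulVec, sub_mulVec, one_mulVec, hGx, mulVec_sub, mulVec_smul,
        add_mulVec, Pi.sub_apply, Pi.add_apply, Pi.smul_apply, smul_eq_mul] at this
      linarith
    obtain ⟨i, hi⟩ := exists_pos_of_nonneg_of_ne_zero hx hx0
    have hs : 0 < 1 - s := pos_of_mul_pos_left ((hx_eq i).symm ▸ hi)
      (add_nonneg (hx i) (mulVec_nonneg_of_nonneg hA hx i))
    have hAx : A *ᵥ x = (s / (1 - s)) • x := funext fun i => by
      have := hx_eq i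
      simp only [Pi.smul_apply, smul_eq_mul]
      field_simp
      linarith
    have := le_specRad_of_smul_le_mulVec hA hx hx0 hAx.ge
    rw [div_le_iff₀ hs] at this
    rw [le_div_iff₀ (by positivity)]
    linarith
  · obtain ⟨x, hx, hx0, hAx⟩ := exists_nonneg_eigenvector_specRad hA
    refine le_specRad_of_smul_le_mulVec hG hx hx0 (le_of_eq (funext fun i => ?_))
    have := congrFun (congrArg (· *ᵥ x) hGA) i
    simp only [← mulVec_mulVec, add_mulVec, one_mulVec, hAx, sub_mulVec, mulVec_add, mulVec_smul,
      Pi.sub_apply, Pi.add_apply, Pi.smul_apply, smul_eq_mul] at this ⊢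
    field_simp
    linarith

theorem IsRegularSplitting.one_sub_mul_one_add {H B C : Matrix (Fin n) (Fin n) ℝ}
    (hs : IsRegularSplitting H B C) (hH : IsUnit H) : (1 - B⁻¹ * C) * (1 + H⁻¹ * C) = 1 := by
  obtain ⟨rfl, hB, -, -⟩ := hs
  have hB' : B⁻¹ * B = 1 := nonsing_inv_mul B ((isUnit_iff_isUnit_det B).1 hB)
  have hH' : (B - C)⁻¹ * (B - C) = 1 := nonsing_inv_mul _ ((isUnit_iff_isUnit_det _).1 hH)
  have h₁ : 1 - B⁻¹ * C = B⁻¹ * (B - C) := by rw [mul_sub, hB']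
  have h₂ : 1 + (B - C)⁻¹ * C = (B - C)⁻¹ * B := by rw [← hH', ← mul_add, sub_add_cancel]
  rw [h₁, h₂, mul_assoc, ← mul_assoc (B - C), mul_nonsing_inv _ ((isUnit_iff_isUnit_det _).1 hH),
    one_mul, hB']

theorem IsRegularSplitting.specRad_inv_mul_eq [Nonempty (Fin n)]
    {H B C : Matrix (Fin n) (Fin n) ℝ} (hs : IsRegularSplitting H B C) (hH : IsUnit H)
    (hHinv : ∀ i j, 0 ≤ H⁻¹ i j) :
    specRad (B⁻¹ * C) = specRad (H⁻¹ * C) / (1 + specRad (H⁻¹ * C)) :=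
  specRad_eq_div_one_add_specRad (mul_apply_nonneg hHinv hs.2.2.2)
    (mul_apply_nonneg hs.2.2.1 hs.2.2.2) (hs.one_sub_mul_one_add hH)

theorem specRad_pos_of_col_pos {A : Matrix (Fin n) (Fin n) ℝ} (hA : ∀ i j, 0 ≤ A i j) {q : Fin n}
    (hq : ∀ i, 0 < A i q) : 0 < specRad A := by
  have : Nonempty (Fin n) := ⟨q⟩
  have hcol : A q q • (fun i => A i q) ≤ A *ᵥ fun i => A i q := fun i => by
    simpa [mul_comm] using mul_le_mulVec_apply hA (fun k => (hq k).le) i q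
  exact (hq q).trans_le (le_specRad_of_smul_le_mulVec hA (fun i => (hq i).le)
    (fun h => (hq q).ne' (congrFun h q)) hcol)

variable {M C C₁ C₂ : Matrix (Fin n) (Fin n) ℝ}

theorem specRad_mul_pos (hM : ∀ i j, 0 < M i j) (hC : ∀ i j, 0 ≤ C i j) (hC0 : C ≠ 0) :
    0 < specRad (M * C) := by
  obtain ⟨p, hp⟩ := Function.ne_iff.1 hC0
  obtain ⟨q, hpq⟩ := Function.ne_iff.1 hp
  exact specRad_pos_of_col_pos (mul_apply_nonneg (fun i j => (hM i j).le) hC)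
    (mul_apply_pos_of_pos hM hC hpq)

theorem specRad_mul_lt_specRad_mul (hM : ∀ i j, 0 < M i j) (hC₂ : ∀ i j, 0 ≤ C₂ i j)
    (hle : ∀ i j, C₂ i j ≤ C₁ i j) (hC₂0 : C₂ ≠ 0) (hne : C₁ - C₂ ≠ 0) :
    specRad (M * C₂) < specRad (M * C₁) := by
  obtain ⟨p, -⟩ := Function.ne_iff.1 hC₂0
  have : Nonempty (Fin n) := ⟨p⟩
  have hM' : ∀ i j, 0 ≤ M i j := fun i j => (hM i j).le
  have hD : ∀ i j, 0 ≤ (C₁ - C₂) i j := fun i j => sub_nonneg.2 (hle i j)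
  set ρ := specRad (M * C₂)
  have hρ : 0 < ρ := specRad_mul_pos hM hC₂ hC₂0
  obtain ⟨x, hx, hx0, hx_eig⟩ := exists_nonneg_eigenvector_specRad (mul_apply_nonneg hM' hC₂)
  rw [← mulVec_mulVec] at hx_eig
  have hC₂x : C₂ *ᵥ x ≠ 0 := fun h => hx0 <| by
    rw [h, mulVec_zero, eq_comm, smul_eq_zero] at hx_eig
    exact hx_eig.resolve_left hρ.ne'
  have hxpos : ∀ i, 0 < x i := fun i => by
    have := mulVec_apply_pos hM (mulVec_nonneg_of_nonneg hC₂ hx) hC₂x i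
    rw [hx_eig] at this
    exact pos_of_mul_pos_right this hρ.le
  set d := M *ᵥ ((C₁ - C₂) *ᵥ x)
  have hd : ∀ i, 0 < d i := mulVec_apply_pos hM (mulVec_nonneg_of_nonneg hD hx)
    (mulVec_ne_zero_of_pos hD hne hxpos)
  obtain ⟨δ, hδ, hδx⟩ := exists_pos_smul_le x hd
  have hsub : (ρ + δ) • x ≤ (M * C₁) *ᵥ x :=
    calc (ρ + δ) • x = ρ • x + δ • x := add_smul ρ δ x
      _ ≤ ρ • x + d := add_le_add_right hδx _
      _ = (M * C₁) *ᵥ x := by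
        rw [← hx_eig, ← mulVec_add, ← add_mulVec, add_sub_cancel, mulVec_mulVec]
  have hC₁ : ∀ i j, 0 ≤ C₁ i j := fun i j => (hC₂ i j).trans (hle i j)
  linarith [le_specRad_of_smul_le_mulVec (mul_apply_nonneg hM' hC₁) hx hx0 hsub]

end Splitting

theorem stmt_3_general {n : ℕ}
    (H B₁ C₁ B₂ C₂ : Matrix (Fin n) (Fin n) ℝ)
    (h1 : IsRegularSplitting H B₁ C₁) (h2 : IsRegularSplitting H B₂ C₂)
    (hH : IsUnit H) (hHinv : ∀ i j, 0 < H⁻¹ i j)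
    (hle : ∀ i j, C₂ i j ≤ C₁ i j)
    (hC2ne : C₂ ≠ 0) (hdiff : C₁ - C₂ ≠ 0) :
    0 < specRad (B₂⁻¹ * C₂) ∧
    specRad (B₂⁻¹ * C₂) < specRad (B₁⁻¹ * C₁) ∧
    specRad (B₁⁻¹ * C₁) < 1 := by
  obtain ⟨p, -⟩ := Function.ne_iff.1 hC2ne
  have : Nonempty (Fin n) := ⟨p⟩
  have hHinv' : ∀ i j, 0 ≤ H⁻¹ i j := fun i j => (hHinv i j).le
  have hρ₂ : 0 < specRad (H⁻¹ * C₂) := specRad_mul_pos hHinv h2.2.2.2 hC2ne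
  have hρ : specRad (H⁻¹ * C₂) < specRad (H⁻¹ * C₁) :=
    specRad_mul_lt_specRad_mul hHinv h2.2.2.2 hle hC2ne hdiff
  rw [h1.specRad_inv_mul_eq hH hHinv', h2.specRad_inv_mul_eq hH hHinv']
  refine ⟨div_pos hρ₂ (by linarith), ?_, (div_lt_one (by linarith)).2 (lt_one_add _)⟩
  rw [div_lt_div_iff₀ (by linarith) (by linarith)]
  linarith

/-- Strict comparison of regular splittings: if `H = B₁ - C₁ = B₂ - C₂`
are regular splittings, `H` is invertible with entrywise strictly positive inverse,
`0 ≤ C₂ ≤ C₁` entrywise, `C₁ ≠ 0`, `C₂ ≠ 0`, `C₁ - C₂ ≠ 0`, then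
`0 < ρ(B₂⁻¹C₂) < ρ(B₁⁻¹C₁) < 1`. -/
theorem stmt_3 {n : ℕ} (hn : 1 ≤ n)
    (H B₁ C₁ B₂ C₂ : Matrix (Fin n) (Fin n) ℝ)
    (h1 : IsRegularSplitting H B₁ C₁) (h2 : IsRegularSplitting H B₂ C₂)
    (hH : IsUnit H) (hHinv : ∀ i j, 0 < H⁻¹ i j)
    (hC2nonneg : ∀ i j, 0 ≤ C₂ i j) (hle : ∀ i j, C₂ i j ≤ C₁ i j)
    (hC1ne : C₁ ≠ 0) (hC2ne : C₂ ≠ 0) (hdiff : C₁ - C₂ ≠ 0) :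
    0 < specRad (B₂⁻¹ * C₂) ∧
    specRad (B₂⁻¹ * C₂) < specRad (B₁⁻¹ * C₁) ∧
    specRad (B₁⁻¹ * C₁) < 1 :=
  stmt_3_general H B₁ C₁ B₂ C₂ h1 h2 hH hHinv hle hC2ne hdiff
end

section
/- Let H and B₂ be n×n symmetric positive-definite real matrices (n ≥ 1) such that (B₂, B₂ - H) is a regular splitting of H. If H and B₂ have at least one diagonal element in common (there exists an index i with H_{ii} = (B₂)_{ii}), then the largest eigenvalue of B₂⁻¹H is at least 1. -/
/-!
With `R = √B₂`, the matrix `B₂⁻¹ H = R⁻¹ (R⁻¹ H R⁻¹) R` is similar to the symmetric matrix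
`M = R⁻¹ H R⁻¹`. If `λ` bounds the spectrum of `M`, then `M ≤ λ • 1` in the Loewner order, and
conjugating by `R` gives `H ≤ λ • B₂`. Comparing `i`-th diagonal entries, where
`H i i = B₂ i i > 0`, forces `λ ≥ 1`.
-/

open Matrix

/-- The largest real eigenvalue of a real square matrix (supremum of the real points
of the spectrum of its complexification). -/
noncomputable def maxEig {n : ℕ} (A : Matrix (Fin n) (Fin n) ℝ) : ℝ :=
  sSup {x : ℝ | (x : ℂ) ∈ spectrum ℂ (A.map (Complex.ofReal ·))}

/-- The smallest real eigenvalue of a real square matrix (infimum of the real points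
of the spectrum of its complexification). -/
noncomputable def minEig {n : ℕ} (A : Matrix (Fin n) (Fin n) ℝ) : ℝ :=
  sInf {x : ℝ | (x : ℂ) ∈ spectrum ℂ (A.map (Complex.ofReal ·))}
open scoped MatrixOrder ComplexOrder

namespace Matrix

variable {n : Type*} [Fintype n] [DecidableEq n]

theorem apply_mem_spectrum_map_iff {K L : Type*} [Field K] [Field L] (f : K →+* L)
    (A : Matrix n n K) (x : K) : f x ∈ spectrum L (A.map f) ↔ x ∈ spectrum K A := by
  rw [mem_spectrum_iff_isRoot_charpoly, mem_spectrum_iff_isRoot_charpoly, charpoly_map,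
    Polynomial.isRoot_map_iff f.injective]

theorem le_smul_of_spectrum_inv_mul_le {𝕜 : Type*} [RCLike 𝕜] {A B : Matrix n n 𝕜}
    (hA : A.IsHermitian) (hB : B.PosDef) {r : ℝ} (hr : ∀ x ∈ spectrum ℝ (B⁻¹ * A), x ≤ r) :
    A ≤ r • B := by
  set R := CFC.sqrt B
  have hRR : R * R = B := CFC.sqrt_mul_sqrt_self B hB.posSemidef.nonneg
  have hR : IsUnit R := (CFC.isUnit_sqrt_iff B hB.posSemidef.nonneg).2 hB.isUnit
  have hdet : IsUnit R.det := (isUnit_iff_isUnit_det R).1 hR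
  have hRsa : IsSelfAdjoint R := (CFC.sqrt_nonneg B).isSelfAdjoint
  set M := R⁻¹ * A * R⁻¹
  have hM : IsSelfAdjoint M := by
    have hRinv : star R⁻¹ = R⁻¹ := IsHermitian.inv hRsa
    simpa only [hRinv] using hA.isSelfAdjoint.conjugate R⁻¹
  have hspec : spectrum ℝ (B⁻¹ * A) = spectrum ℝ M := by
    have hconj : B⁻¹ * A = (↑hR.unit⁻¹ : Matrix n n 𝕜) * M * (hR.unit : Matrix n n 𝕜) := by
      rw [coe_units_inv, IsUnit.unit_spec, ← hRR, mul_inv_rev]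
      simp only [M, ← mul_assoc, nonsing_inv_mul_cancel_right (h := hdet)]
    rw [hconj, spectrum.units_conjugate']
  have hMr : M ≤ algebraMap ℝ _ r := le_algebraMap_of_spectrum_le (hspec ▸ hr) hM
  calc A = R * M * R := by
        simp only [M, ← mul_assoc, nonsing_inv_mul_cancel_right (h := hdet),
          mul_nonsing_inv (h := hdet), one_mul]
    _ ≤ R * algebraMap ℝ _ r * R := hRsa.conjugate_le_conjugate hMr
    _ = r • B := by
      rw [Algebra.algebraMap_eq_smul_one, mul_smul_comm, smul_mul_assoc, mul_one, hRR]

end Matrix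

theorem maxEig_eq_sSup_spectrum {n : ℕ} (A : Matrix (Fin n) (Fin n) ℝ) :
    maxEig A = sSup (spectrum ℝ A) := by
  unfold maxEig
  congr 1
  ext x
  exact apply_mem_spectrum_map_iff Complex.ofRealHom A x

theorem stmt_9_general {n : ℕ}
    (H B₂ : Matrix (Fin n) (Fin n) ℝ)
    (hHpd : H.PosDef) (hB2pd : B₂.PosDef)
    (hdiag : ∃ i, H i i = B₂ i i) :
    1 ≤ maxEig (B₂⁻¹ * H) := by
  obtain ⟨i, hi⟩ := hdiag
  rw [maxEig_eq_sSup_spectrum]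
  set r := sSup (spectrum ℝ (B₂⁻¹ * H))
  have hHB : H ≤ r • B₂ := le_smul_of_spectrum_inv_mul_le hHpd.isHermitian hB2pd
    fun x hx => le_csSup finite_real_spectrum.bddAbove hx
  have hii : B₂ i i ≤ r * B₂ i i := by
    simpa [hi] using (le_iff.1 hHB).diag_nonneg (i := i)
  exact le_of_mul_le_mul_right (by rwa [one_mul]) hB2pd.diag_pos

/-- Let `H` and `B₂` be symmetric positive-definite with
`(B₂, B₂ - H)` a regular splitting of `H`. If `H` and `B₂` share a diagonal element,
then the largest eigenvalue of `B₂⁻¹H` is at least `1`. -/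
theorem stmt_9 {n : ℕ} (hn : 1 ≤ n)
    (H B₂ : Matrix (Fin n) (Fin n) ℝ)
    (hHpd : H.PosDef) (hB2pd : B₂.PosDef)
    (h2 : IsRegularSplitting H B₂ (B₂ - H))
    (hdiag : ∃ i, H i i = B₂ i i) :
    1 ≤ maxEig (B₂⁻¹ * H) :=
  stmt_9_general H B₂ hHpd hB2pd hdiag
end
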